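/- For Re(s) > 0 and y > 0: K_{s-1/2}(2πy) = (√π / Γ(s)) (πy)^{s-1/2} ∫_1^∞ (t²-1)^{s-1} e^{-2πty} dt. -/

import Mathlib

open Real MeasureTheory Set Complex

/-- The K-Bessel function `K_ν(y) = (1/2) ∫_0^∞ e^{-y(t+1/t)/2} t^ν dt/t` for `y > 0`,
with complex order `ν`. -/
noncomputable def Kbessel (ν : ℂ) (y : ℝ) : ℂ :=
  (1 / 2) * ∫ t in Ioi (0 : ℝ), Complex.exp (-(y * (t + 1 / t) / 2 : ℝ)) * (t : ℂ) ^ ν / t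

/-!
Completing the square and the Cauchy–Schlömilch substitution `r ↦ r - b / r` reduce
`∫_0^∞ exp (-a (v + b² / v)) v^{-3/2} dv` to a Gaussian integral, whose value gives
`√(π / a) e^{-2ab} / b`. With `t = √(1 + w)` and `b = t`, this turns
`∫_1^∞ (t² - 1)^{s-1} e^{-2at} dt` into a double integral over `(w, v) ∈ (0, ∞)²` whose integrand
is `w^{s-1} e^{-aw/v}` times a function of `v`. Integrating first in `w` gives `Γ(s) (v / a)^s`,
and what is left is a multiple of `∫_0^∞ exp (-a (v + 1 / v)) v^{s-3/2} dv = 2 K_{s-1/2}(2a)`;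
finally `a = πy`.
-/

section ChangeOfVariables

variable {E : Type*} [NormedAddCommGroup E] [NormedSpace ℝ E]

theorem integral_comp_div_Ioi (g : ℝ → E) {c : ℝ} (hc : 0 < c) :
    ∫ r in Ioi 0, (c / r ^ 2) • g (c / r) = ∫ r in Ioi 0, g r := by
  have himage : (fun r ↦ c / r) '' Ioi 0 = Ioi 0 :=
    Subset.antisymm (image_subset_iff.2 fun r hr ↦ div_pos hc hr)
      fun r hr ↦ ⟨c / r, div_pos hc hr, div_div_cancel₀ hc.ne'⟩
  have hderiv : ∀ r ∈ Ioi (0 : ℝ), HasDerivWithinAt (fun r ↦ c / r) (-(c / r ^ 2)) (Ioi 0) r :=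
    fun r hr ↦ by simpa [div_eq_mul_inv] using
      ((hasDerivAt_inv (ne_of_gt hr)).const_mul c).hasDerivWithinAt
  have := integral_image_eq_integral_abs_deriv_smul measurableSet_Ioi hderiv
    (fun r _ r' _ h ↦ by rwa [div_eq_div_iff_comm, div_left_inj' hc.ne'] at h) g
  rw [himage] at this
  rw [this]
  refine setIntegral_congr_fun measurableSet_Ioi fun r (hr : 0 < r) ↦ ?_
  rw [abs_neg, abs_of_pos (by positivity)]

theorem hasDerivAt_sub_div (c : ℝ) {r : ℝ} (hr : r ≠ 0) :
    HasDerivAt (fun r ↦ r - c / r) (1 + c / r ^ 2) r := by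
  have := (hasDerivAt_id' r).sub ((hasDerivAt_inv hr).const_mul c)
  simp only [← div_eq_mul_inv, mul_neg, sub_neg_eq_add] at this
  exact this

theorem strictMonoOn_sub_div {c : ℝ} (hc : 0 < c) : StrictMonoOn (fun r ↦ r - c / r) (Ioi 0) :=
  fun r hr r' _ h ↦ by
    have : c / r' < c / r := div_lt_div_of_pos_left hc hr h
    simp only; linarith

theorem image_sub_div_Ioi {c : ℝ} (hc : 0 < c) : (fun r ↦ r - c / r) '' Ioi 0 = univ := by
  refine eq_univ_of_forall fun w ↦ ?_
  -- the positive root of `r ^ 2 - w r - c = 0`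
  set r := (w + √(w ^ 2 + 4 * c)) / 2
  have hsq : √(w ^ 2 + 4 * c) ^ 2 = w ^ 2 + 4 * c := Real.sq_sqrt (by positivity)
  have hw : |w| < √(w ^ 2 + 4 * c) := by
    rw [← Real.sqrt_sq_eq_abs]; exact Real.sqrt_lt_sqrt (sq_nonneg w) (by linarith)
  have hr : 0 < r := by have := neg_abs_le w; simp only [r]; linarith
  refine ⟨r, hr, ?_⟩
  field_simp
  simp only [r]
  nlinarith

theorem integral_comp_sub_div_Ioi (g : ℝ → E) {c : ℝ} (hc : 0 < c) :
    ∫ r in Ioi 0, (1 + c / r ^ 2) • g (r - c / r) = ∫ w, g w := by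
  have := integral_image_eq_integral_abs_deriv_smul measurableSet_Ioi
    (fun r hr ↦ (hasDerivAt_sub_div c (ne_of_gt hr)).hasDerivWithinAt)
    (strictMonoOn_sub_div hc).injOn g
  rw [image_sub_div_Ioi hc, setIntegral_univ] at this
  rw [this]
  refine setIntegral_congr_fun measurableSet_Ioi fun r hr ↦ ?_
  rw [abs_of_pos (by positivity)]

theorem integrableOn_comp_sub_div_Ioi_iff (g : ℝ → E) {c : ℝ} (hc : 0 < c) :
    IntegrableOn (fun r ↦ (1 + c / r ^ 2) • g (r - c / r)) (Ioi 0) ↔ Integrable g := by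
  have := integrableOn_image_iff_integrableOn_abs_deriv_smul measurableSet_Ioi
    (fun r hr ↦ (hasDerivAt_sub_div c (ne_of_gt hr)).hasDerivWithinAt)
    (strictMonoOn_sub_div hc).injOn g
  rw [image_sub_div_Ioi hc, integrableOn_univ] at this
  rw [this]
  refine integrableOn_congr_fun (fun r hr ↦ ?_) measurableSet_Ioi
  rw [abs_of_pos (by positivity)]

theorem integral_comp_sqrt_one_add_Ioi (g : ℝ → E) :
    ∫ w in Ioi 0, (2 * √(1 + w))⁻¹ • g √(1 + w) = ∫ t in Ioi 1, g t := by
  have himage : (fun w ↦ √(1 + w)) '' Ioi 0 = Ioi 1 := by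
    refine Subset.antisymm (image_subset_iff.2 fun w hw ↦ ?_) fun t ht ↦ ⟨t ^ 2 - 1, ?_, ?_⟩
    · simpa using Real.lt_sqrt_of_sq_lt (by linarith [mem_Ioi.1 hw])
    · have : 1 < t := ht; simp only [mem_Ioi]; nlinarith
    · have : 1 < t := ht; simp [Real.sqrt_sq (by linarith : 0 ≤ t)]
  have hderiv : ∀ w ∈ Ioi (0 : ℝ),
      HasDerivWithinAt (fun w ↦ √(1 + w)) ((2 * √(1 + w))⁻¹) (Ioi 0) w := fun w hw ↦ by
    have : 0 < 1 + w := by linarith [mem_Ioi.1 hw]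
    simpa [div_eq_inv_mul] using
      (((hasDerivAt_id w).const_add 1).sqrt this.ne').hasDerivWithinAt
  have hinj : InjOn (fun w ↦ √(1 + w)) (Ioi 0) := fun w hw w' hw' h ↦ by
    have := (Real.sqrt_inj (by linarith [mem_Ioi.1 hw]) (by linarith [mem_Ioi.1 hw'])).1 h
    linarith
  have := integral_image_eq_integral_abs_deriv_smul measurableSet_Ioi hderiv hinj g
  rw [himage] at this
  rw [this]
  refine setIntegral_congr_fun measurableSet_Ioi fun w hw ↦ ?_
  have : 0 < 1 + w := by linarith [mem_Ioi.1 hw]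
  rw [abs_of_pos (by positivity)]

theorem integral_div_sq_smul_comp_sub_div_Ioi {c : ℝ} (hc : 0 < c) {g : ℝ → E}
    (hg : Integrable g) (hg_even : ∀ w, g (-w) = g w) :
    ∫ r in Ioi 0, (c / r ^ 2) • g (r - c / r) = (2 : ℝ)⁻¹ • ∫ w, g w := by
  set h := fun r ↦ g (r - c / r)
  -- `r ↦ c / r` maps `r - c / r` to its negative
  have hsymm : ∫ r in Ioi 0, (c / r ^ 2) • h r = ∫ r in Ioi 0, h r := by
    rw [← integral_comp_div_Ioi h hc]
    refine setIntegral_congr_fun measurableSet_Ioi fun r (hr : 0 < r) ↦ ?_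
    simp only [h, div_div_cancel₀ hc.ne', ← hg_even (r - c / r), neg_sub]
  have hint : IntegrableOn (fun r ↦ (1 + c / r ^ 2) • h r) (Ioi 0) :=
    (integrableOn_comp_sub_div_Ioi_iff g hc).2 hg
  have hint_div : IntegrableOn (fun r ↦ (c / r ^ 2) • h r) (Ioi 0) := by
    refine (hint.bdd_smul 1 (φ := fun r ↦ c / r ^ 2 / (1 + c / r ^ 2))
      (by fun_prop : Measurable _).aestronglyMeasurable ?_).congr ?_
    · refine ae_restrict_of_forall_mem measurableSet_Ioi fun r (hr : 0 < r) ↦ ?_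
      have : 0 < c / r ^ 2 := by positivity
      rw [Real.norm_of_nonneg (by positivity), div_le_one (by positivity)]
      linarith
    · refine ae_restrict_of_forall_mem measurableSet_Ioi fun r (hr : 0 < r) ↦ ?_
      have : 0 < 1 + c / r ^ 2 := by positivity
      simp only [Pi.smul_apply', smul_smul, div_mul_cancel₀ _ this.ne']
  have hsplit : ∫ w, g w = (∫ r in Ioi 0, h r) + ∫ r in Ioi 0, (c / r ^ 2) • h r := by
    have hint_h : IntegrableOn h (Ioi 0) := (hint.sub hint_div).congr_fun
      (fun r _ ↦ by simp only [Pi.sub_apply, add_smul, one_smul, add_sub_cancel_right])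
      measurableSet_Ioi
    rw [← integral_comp_sub_div_Ioi g hc, ← integral_add hint_h hint_div]
    refine setIntegral_congr_fun measurableSet_Ioi fun r _ ↦ ?_
    simp only [add_smul, one_smul, h]
  rw [hsplit, hsymm, ← two_smul ℝ, smul_smul, inv_mul_cancel₀ two_ne_zero, one_smul]

end ChangeOfVariables

theorem integral_exp_neg_mul_add_sq_div_mul_rpow {a b : ℝ} (ha : 0 < a) (hb : 0 < b) :
    ∫ v in Ioi 0, Real.exp (-(a * (v + b ^ 2 / v))) * v ^ (-(3 / 2) : ℝ)
      = √(π / a) * Real.exp (-(2 * a * b)) / b := by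
  -- substitute `v = r ^ 2` and complete the square: `r ^ 2 + b ^ 2 / r ^ 2 = (r - b / r) ^ 2 + 2 b`
  rw [← integral_comp_rpow_Ioi_of_pos (p := 2)
    (g := fun v ↦ Real.exp (-(a * (v + b ^ 2 / v))) * v ^ (-(3 / 2) : ℝ)) two_pos]
  have hpoint : ∀ r ∈ Ioi (0 : ℝ), (2 * r ^ ((2 : ℝ) - 1)) • (Real.exp (-(a * (r ^ (2 : ℝ)
      + b ^ 2 / r ^ (2 : ℝ)))) * (r ^ (2 : ℝ)) ^ (-(3 / 2) : ℝ))
      = (2 * Real.exp (-(2 * a * b)) / b) * ((b / r ^ 2) • Real.exp (-a * (r - b / r) ^ 2)) := by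
    intro r (hr : 0 < r)
    have hpow : (r ^ (2 : ℝ)) ^ (-(3 / 2) : ℝ) = (r ^ 3)⁻¹ := by
      rw [← Real.rpow_mul hr.le, ← Real.rpow_natCast, ← Real.rpow_neg hr.le]
      norm_num
    rw [hpow, Real.rpow_two, show (2 : ℝ) - 1 = 1 by norm_num, Real.rpow_one, smul_eq_mul,
      smul_eq_mul, show -(a * (r ^ 2 + b ^ 2 / r ^ 2)) = -(2 * a * b) + -a * (r - b / r) ^ 2 by
        field_simp; ring, Real.exp_add]
    field_simp
  rw [setIntegral_congr_fun measurableSet_Ioi hpoint, integral_const_mul,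
    integral_div_sq_smul_comp_sub_div_Ioi hb (integrable_exp_neg_mul_sq ha) (fun w ↦ by simp),
    integral_gaussian, smul_eq_mul]
  ring

theorem integrableOn_exp_neg_mul_add_inv_mul_rpow {a : ℝ} (ha : 0 < a) (β : ℝ) :
    IntegrableOn (fun v ↦ Real.exp (-(a * (v + 1 / v))) * v ^ β) (Ioi 0) := by
  obtain ⟨k, hk⟩ : ∃ k : ℕ, -1 < β + k := ⟨⌈-β⌉₊, by linarith [Nat.le_ceil (-β)]⟩
  have hmajor := (integrableOn_rpow_mul_exp_neg_mul_rpow hk one_pos ha).const_mul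
    (k.factorial / a ^ k)
  refine hmajor.mono' (by fun_prop : Measurable _).aestronglyMeasurable
    (ae_restrict_of_forall_mem measurableSet_Ioi fun v (hv : 0 < v) ↦ ?_)
  have hexp : Real.exp (-(a / v)) ≤ k.factorial / a ^ k * v ^ k := by
    have := Real.pow_div_factorial_le_exp (a / v) (by positivity) k
    rw [Real.exp_neg]
    calc (Real.exp (a / v))⁻¹ ≤ ((a / v) ^ k / k.factorial)⁻¹ := inv_anti₀ (by positivity) this
      _ = k.factorial / a ^ k * v ^ k := by rw [div_pow]; field_simp
  rw [Real.norm_of_nonneg (by positivity), Real.rpow_one, Real.rpow_add hv, Real.rpow_natCast,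
    mul_add, one_div, ← div_eq_mul_inv, neg_add, Real.exp_add]
  calc Real.exp (-(a * v)) * Real.exp (-(a / v)) * v ^ β
      ≤ Real.exp (-(a * v)) * (k.factorial / a ^ k * v ^ k) * v ^ β := by gcongr
    _ = k.factorial / a ^ k * (v ^ β * v ^ k * Real.exp (-a * v)) := by ring_nf

theorem integrable_cpow_mul_exp_neg_div_mul_prod {s : ℂ} (hs : 0 < s.re) {c : ℝ} (hc : 0 < c)
    {g : ℝ → ℝ} (hg : Measurable g) (hgi : IntegrableOn (fun v ↦ v ^ s.re * g v) (Ioi 0)) :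
    Integrable
      (Function.uncurry fun w v : ℝ ↦ (w : ℂ) ^ (s - 1) * (Real.exp (-(c / v * w)) * g v : ℝ))
      ((volume.restrict (Ioi 0)).prod (volume.restrict (Ioi 0))) := by
  have hnorm : ∀ v, ∀ w ∈ Ioi (0 : ℝ),
      ‖(w : ℂ) ^ (s - 1) * (Real.exp (-(c / v * w)) * g v : ℝ)‖
        = |g v| * (w ^ (s.re - 1) * Real.exp (-(c / v * w))) := fun v w (hw : 0 < w) ↦ by
    rw [norm_mul, Complex.norm_cpow_eq_rpow_re_of_pos hw, Complex.norm_real, Real.norm_eq_abs,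
      abs_mul, Real.abs_exp, Complex.sub_re, Complex.one_re]
    ring
  have hgamma : ∀ v ∈ Ioi (0 : ℝ),
      ∫ w in Ioi (0 : ℝ), ‖(w : ℂ) ^ (s - 1) * (Real.exp (-(c / v * w)) * g v : ℝ)‖
        = Real.Gamma s.re / c ^ s.re * ‖v ^ s.re * g v‖ := fun v (hv : 0 < v) ↦ by
    rw [setIntegral_congr_fun measurableSet_Ioi (hnorm v), integral_const_mul,
      Real.integral_rpow_mul_exp_neg_mul_Ioi hs (by positivity), one_div_div,
      Real.div_rpow hv.le hc.le, norm_mul, Real.norm_of_nonneg (by positivity), Real.norm_eq_abs]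
    ring
  rw [integrable_prod_iff' (by fun_prop : Measurable _).aestronglyMeasurable]
  refine ⟨ae_restrict_of_forall_mem measurableSet_Ioi fun v (hv : 0 < v) ↦ ?_, ?_⟩
  · refine (integrable_norm_iff (by fun_prop : Measurable _).aestronglyMeasurable).1 ?_
    refine IntegrableOn.congr_fun ((integrableOn_rpow_mul_exp_neg_mul_rpow
      (s := s.re - 1) (by linarith) one_pos (div_pos hc hv)).const_mul |g v|) (fun w hw ↦ ?_)
      measurableSet_Ioi
    rw [Function.uncurry_apply_pair, hnorm v w hw, Real.rpow_one, neg_mul]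
  · exact IntegrableOn.congr_fun (hgi.norm.const_mul _) (fun v hv ↦ (hgamma v hv).symm)
      measurableSet_Ioi

theorem Kbessel_two_mul (ν : ℂ) (a : ℝ) :
    Kbessel ν (2 * a)
      = 1 / 2 * ∫ t in Ioi (0 : ℝ), (Real.exp (-(a * (t + 1 / t))) : ℂ) * (t : ℂ) ^ (ν - 1) := by
  rw [Kbessel]
  congr 1
  refine setIntegral_congr_fun measurableSet_Ioi fun t (ht : 0 < t) ↦ ?_
  rw [Complex.cpow_sub _ _ (Complex.ofReal_ne_zero.2 ht.ne'), Complex.cpow_one,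
    Complex.ofReal_exp, mul_div_assoc]
  push_cast
  ring_nf

section BesselIntegral

variable {s : ℂ} {a : ℝ}

theorem integral_sq_sub_one_cpow_mul_exp_eq_integral_integral (ha : 0 < a) :
    ∫ t in Ioi (1 : ℝ), ((t ^ 2 - 1 : ℝ) : ℂ) ^ (s - 1) * Complex.exp (-(2 * a * t : ℝ))
      = (√(a / π) / 2 : ℝ) * ∫ w in Ioi (0 : ℝ), ∫ v in Ioi (0 : ℝ), (w : ℂ) ^ (s - 1) *
          (Real.exp (-(a / v * w)) * (Real.exp (-(a * (v + 1 / v))) * v ^ (-(3 / 2) : ℝ)) : ℝ) := by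
  rw [← integral_comp_sqrt_one_add_Ioi, ← integral_const_mul]
  refine setIntegral_congr_fun measurableSet_Ioi fun w (hw : 0 < w) ↦ ?_
  have hb : 0 < √(1 + w) := Real.sqrt_pos.2 (by linarith)
  have hsq : √(1 + w) ^ 2 = 1 + w := Real.sq_sqrt (by linarith)
  have hglasser := integral_exp_neg_mul_add_sq_div_mul_rpow ha hb
  rw [hsq] at hglasser
  have hsplit : ∀ v ∈ Ioi (0 : ℝ), Real.exp (-(a / v * w)) * (Real.exp (-(a * (v + 1 / v)))
      * v ^ (-(3 / 2) : ℝ)) = Real.exp (-(a * (v + (1 + w) / v))) * v ^ (-(3 / 2) : ℝ) :=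
    fun v (hv : 0 < v) ↦ by
      rw [← mul_assoc, ← Real.exp_add]
      congr 2
      field_simp
      ring
  rw [integral_const_mul, integral_complex_ofReal, setIntegral_congr_fun measurableSet_Ioi hsplit,
    hglasser, hsq, add_sub_cancel_left, Complex.real_smul]
  have hπa : √(a / π) * √(π / a) = 1 := by
    rw [← Real.sqrt_mul (by positivity), div_mul_div_cancel₀ (by positivity),
      div_self (by positivity), Real.sqrt_one]
  have hπa' : (√(a / π) : ℂ) * √(π / a) = 1 := by exact_mod_cast hπa
  push_cast
  linear_combination (-((w : ℂ) ^ (s - 1) * Complex.exp (-(2 * a * √(1 + w))) / (2 * √(1 + w))))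
    * hπa'

theorem integral_sq_sub_one_cpow_mul_exp (hs : 0 < s.re) (ha : 0 < a) :
    ∫ t in Ioi (1 : ℝ), ((t ^ 2 - 1 : ℝ) : ℂ) ^ (s - 1) * Complex.exp (-(2 * a * t : ℝ))
      = Complex.Gamma s / √π * (a : ℂ) ^ (1 / 2 - s) * Kbessel (s - 1 / 2) (2 * a) := by
  set g : ℝ → ℝ := fun v ↦ Real.exp (-(a * (v + 1 / v))) * v ^ (-(3 / 2) : ℝ)
  have hg : IntegrableOn (fun v ↦ v ^ s.re * g v) (Ioi 0) := by
    refine (integrableOn_exp_neg_mul_add_inv_mul_rpow ha (s.re - 3 / 2)).congr_fun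
      (fun v (hv : 0 < v) ↦ ?_) measurableSet_Ioi
    rw [mul_left_comm, ← Real.rpow_add hv, sub_eq_add_neg]
  rw [integral_sq_sub_one_cpow_mul_exp_eq_integral_integral ha,
    integral_integral_swap (integrable_cpow_mul_exp_neg_div_mul_prod hs ha (by fun_prop) hg),
    Kbessel_two_mul, ← integral_const_mul, ← integral_const_mul, ← integral_const_mul]
  refine setIntegral_congr_fun measurableSet_Ioi fun v (hv : 0 < v) ↦ ?_
  have hgamma : ∫ w in Ioi (0 : ℝ), (w : ℂ) ^ (s - 1) * (Real.exp (-(a / v * w)) * g v : ℝ)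
      = g v * (v / a : ℝ) ^ s * Complex.Gamma s := by
    rw [show ((v / a : ℝ) : ℂ) = 1 / ((a / v : ℝ) : ℂ) by push_cast; field_simp, mul_assoc,
      ← Complex.integral_cpow_mul_exp_neg_mul_Ioi hs (div_pos ha hv), ← integral_const_mul]
    refine setIntegral_congr_fun measurableSet_Ioi fun w _ ↦ ?_
    push_cast
    ring
  have hv' : (v : ℂ) ≠ 0 := Complex.ofReal_ne_zero.2 hv.ne'
  have ha' : (a : ℂ) ≠ 0 := Complex.ofReal_ne_zero.2 ha.ne'
  rw [hgamma, Complex.ofReal_div v a, Complex.div_cpow_ofReal_nonneg hv.le ha.le,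
    Complex.cpow_sub _ _ ha', show s - 1 / 2 - 1 = s + -(3 / 2 : ℝ) by push_cast; ring,
    Complex.cpow_add _ _ hv', Real.sqrt_div' _ pi_pos.le, Real.sqrt_eq_rpow]
  simp only [g]
  push_cast
  rw [Complex.ofReal_cpow ha.le, Complex.ofReal_cpow hv.le]
  push_cast
  ring

end BesselIntegral

/-- For `Re s > 0` and `y > 0`,
`K_{s-1/2}(2πy) = (√π / Γ(s)) (πy)^{s-1/2} ∫_1^∞ (t²-1)^{s-1} e^{-2πty} dt`. -/
theorem Kbessel_eq_integral (s : ℂ) (hs : 0 < s.re) (y : ℝ) (hy : 0 < y) :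
    Kbessel (s - 1 / 2) (2 * π * y)
      = ((Real.sqrt π : ℂ) / Complex.Gamma s) * ((π * y : ℝ) : ℂ) ^ (s - 1 / 2)
        * ∫ t in Ioi (1 : ℝ), ((t ^ 2 - 1 : ℝ) : ℂ) ^ (s - 1)
            * Complex.exp (-(2 * π * t * y : ℝ)) := by
  have ha : 0 < π * y := by positivity
  have hpow : ((π * y : ℝ) : ℂ) ^ (s - 1 / 2) * ((π * y : ℝ) : ℂ) ^ (1 / 2 - s) = 1 := by
    rw [← Complex.cpow_add _ _ (Complex.ofReal_ne_zero.2 ha.ne')]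
    simp
  have hΓ := Complex.Gamma_ne_zero_of_re_pos hs
  have hπ : (√π : ℂ) ≠ 0 := Complex.ofReal_ne_zero.2 (Real.sqrt_pos.2 pi_pos).ne'
  have hconst : (√π : ℂ) / Complex.Gamma s * (Complex.Gamma s / √π) = 1 := by field_simp
  simp only [show ∀ t, 2 * π * t * y = 2 * (π * y) * t from fun t ↦ by ring]
  rw [integral_sq_sub_one_cpow_mul_exp hs ha, show 2 * π * y = 2 * (π * y) by ring]
  calc Kbessel (s - 1 / 2) (2 * (π * y))
      = (√π / Complex.Gamma s * (Complex.Gamma s / √π))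
          * (((π * y : ℝ) : ℂ) ^ (s - 1 / 2) * ((π * y : ℝ) : ℂ) ^ (1 / 2 - s))
          * Kbessel (s - 1 / 2) (2 * (π * y)) := by rw [hconst, hpow, one_mul, one_mul]
    _ = _ := by ring
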